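/- Let T be an ergodic, measure-preserving Markov transformation of a probability space (X, m) with finite Markov partition β, let S be a finite state space, and suppose each transition function f_i : X → S is constant on each element of β. If the deterministic walk is transitive on S, then there exists a cylinder set a of positive measure that is transitive: for every i ∈ S and every x ∈ a, the orbit (U_{i,n}(x))_{n≥0} visits every state in S at least once. -/

import Mathlib

open MeasureTheory Set Filter

/-- The skew product `T_f (x, i) = (T x, f_i x)` driving a deterministic walk. -/
def detSkew {X S : Type*} (T : X → X) (f : S → X → S) : X × S → X × S :=
  fun p => (T p.1, f p.2 p.1)

/-- The deterministic walk `U_{i,n}(x) = π₂ (T_f^n (x, i))`. -/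
def detWalk {X S : Type*} (T : X → X) (f : S → X → S) (i : S) (n : ℕ) (x : X) : S :=
  ((detSkew T f)^[n] (x, i)).2

/-- The deterministic walk is transitive on `S` if for all `i j`, a.e. point
visits `j` at some positive time when started from `i`. -/
def WalkTransitive {X S : Type*} [MeasurableSpace X] (m : Measure X)
    (T : X → X) (f : S → X → S) : Prop :=
  ∀ i j : S, m {x | ∃ n, 1 ≤ n ∧ detWalk T f i n x = j} = 1

/-- A (non-singular) Markov transformation with Markov partition `P`. -/
structure IsMarkovMap {Y : Type*} [MeasurableSpace Y] (μ : Measure Y) (R : Y → Y)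
    (P : Set (Set Y)) : Prop where
  nonsingular : ∀ A : Set Y, MeasurableSet A → μ A = 0 → μ (R ⁻¹' A) = 0
  measurableSet : ∀ a ∈ P, MeasurableSet a
  pairwiseDisjoint : P.PairwiseDisjoint id
  sUnion_eq : ⋃₀ P = Set.univ
  image_sUnion : ∀ a ∈ P, ∃ Q ⊆ P, R '' a = ⋃₀ Q
  injOn : ∀ a ∈ P, Set.InjOn R a

/-- `a` communicates with `b`: a positive measure set of points of `a` visits `b`. -/
def Communicates {Y : Type*} [MeasurableSpace Y] (μ : Measure Y) (R : Y → Y)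
    (a b : Set Y) : Prop :=
  0 < μ {x | x ∈ a ∧ ∃ n, 1 ≤ n ∧ R^[n] x ∈ b}

/-- The communication class of `a` in the partition `P`. -/
def commClass {Y : Type*} [MeasurableSpace Y] (μ : Measure Y) (R : Y → Y)
    (P : Set (Set Y)) (a : Set Y) : Set (Set Y) :=
  {b ∈ P | Communicates μ R a b ∧ Communicates μ R b a}

/-- `C` is a communication class of the partition `P`. -/
def IsCommClass {Y : Type*} [MeasurableSpace Y] (μ : Measure Y) (R : Y → Y)
    (P : Set (Set Y)) (C : Set (Set Y)) : Prop :=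
  ∃ a ∈ P, C = commClass μ R P a

/-- `C` is a closed communication class of the partition `P`. -/
def IsClosedCommClass {Y : Type*} [MeasurableSpace Y] (μ : Measure Y) (R : Y → Y)
    (P : Set (Set Y)) (C : Set (Set Y)) : Prop :=
  IsCommClass μ R P C ∧ ∀ a ∈ C, ∀ b ∈ P, Communicates μ R a b → Communicates μ R b a

/-- The product partition `β̃ = β × S`. -/
def prodPartition {X : Type*} (S : Type*) (β : Set (Set X)) : Set (Set (X × S)) :=
  {c | ∃ a ∈ β, ∃ i : S, c = a ×ˢ ({i} : Set S)}

/-- The measure `μ = (m / #S) × counting measure` on `X × S`. -/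
noncomputable def fiberMeasure {X : Type*} (S : Type*) [MeasurableSpace X]
    [MeasurableSpace S] [Fintype S] (m : Measure X) : Measure (X × S) :=
  (Fintype.card S : ENNReal)⁻¹ • m.prod Measure.count

/-- The `n`-cylinder `[w 0, …, w (n-1)] = ⋂ j, R^{-j} (w j)`. -/
def cylinder {Y : Type*} (R : Y → Y) {n : ℕ} (w : Fin n → Set Y) : Set Y :=
  ⋂ j : Fin n, (R^[(j : ℕ)]) ⁻¹' w j

/-- The Strong Distortion Property: the Radon–Nikodym derivatives
`v'_a = d(μ ∘ R^{-n})/dμ` on images of cylinders have a.e. bounded ratio. -/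
def StrongDistortion {Y : Type*} [MeasurableSpace Y] (μ : Measure Y) (R : Y → Y)
    (P : Set (Set Y)) : Prop :=
  ∃ D : ENNReal, 1 ≤ D ∧ D ≠ ⊤ ∧
    ∀ n : ℕ, 1 ≤ n → ∀ w : Fin n → Set Y, (∀ j, w j ∈ P) →
      ∀ v : Y → ENNReal, Measurable v →
        (∀ B : Set Y, MeasurableSet B →
          ∫⁻ x in (R^[n] '' cylinder R w) ∩ B, v x ∂μ = μ (cylinder R w ∩ R^[n] ⁻¹' B)) →
        ∀ᵐ x ∂μ.restrict (R^[n] '' cylinder R w),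
          ∀ᵐ y ∂μ.restrict (R^[n] '' cylinder R w), v x / v y ≤ D

/-- The Finite Images property for a Markov map. -/
def FiniteImages {Y : Type*} (R : Y → Y) (P : Set (Set Y)) : Prop :=
  {s : Set Y | ∃ a ∈ P, s = R '' a}.Finite

/-- The partition `P` is irreducible under `R`: all elements intercommunicate. -/
def IrreduciblePartition {Y : Type*} [MeasurableSpace Y] (μ : Measure Y) (R : Y → Y)
    (P : Set (Set Y)) : Prop :=
  ∀ a ∈ P, ∀ b ∈ P, Communicates μ R a b

/-!
Almost every point visits every state from every starting state, and almost every point lies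
only in cylinders of positive measure. Fix such a point `x` and a time `N` by which all these
visits have happened. Since each `f i` is constant on the elements of `β`, the first `N` steps
of the walk depend only on the `N`-cylinder containing `x`, so that cylinder is transitive.
-/

section DeterministicWalk

variable {X S : Type*} (T : X → X) (f : S → X → S)

lemma detSkew_iterate_fst (x : X) (i : S) (n : ℕ) :
    ((detSkew T f)^[n] (x, i)).1 = T^[n] x := by
  induction n with
  | zero => rfl
  | succ n ih => rw [Function.iterate_succ_apply', Function.iterate_succ_apply', ← ih]; rfl

lemma detWalk_succ (i : S) (n : ℕ) (x : X) :
    detWalk T f i (n + 1) x = f (detWalk T f i n x) (T^[n] x) := by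
  rw [detWalk, Function.iterate_succ_apply', ← detSkew_iterate_fst T f x i n]
  rfl

lemma detWalk_eq_of_mem_cylinder {P : Set (Set X)}
    (hconst : ∀ i : S, ∀ a ∈ P, ∀ x ∈ a, ∀ y ∈ a, f i x = f i y)
    {n : ℕ} {w : Fin n → Set X} (hw : ∀ j, w j ∈ P) {x y : X}
    (hx : x ∈ cylinder T w) (hy : y ∈ cylinder T w) (i : S) {k : ℕ} (hk : k ≤ n) :
    detWalk T f i k x = detWalk T f i k y := by
  induction k with
  | zero => rfl
  | succ k ih =>
    rw [detWalk_succ, detWalk_succ, ih (by omega)]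
    have hk' : k < n := hk
    exact hconst _ _ (hw ⟨k, hk'⟩) _ (mem_iInter.1 hx ⟨k, hk'⟩) _ (mem_iInter.1 hy ⟨k, hk'⟩)

variable [MeasurableSpace X]

lemma measurableSet_preimage_of_constOn_cover {P : Set (Set X)} (hP : P.Countable)
    (hmeas : ∀ a ∈ P, MeasurableSet a) (hcover : ⋃₀ P = univ) {g : X → S}
    (hg : ∀ a ∈ P, ∀ x ∈ a, ∀ y ∈ a, g x = g y) (t : Set S) :
    MeasurableSet (g ⁻¹' t) := by
  have h : g ⁻¹' t = ⋃₀ {a ∈ P | a ⊆ g ⁻¹' t} := by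
    refine Subset.antisymm (fun x hx => ?_) (sUnion_subset fun a ha => ha.2)
    obtain ⟨a, ha, hxa⟩ := mem_sUnion.1 (hcover ▸ mem_univ x)
    exact ⟨a, ⟨ha, fun y hy => by rw [mem_preimage, hg a ha y hy x hxa]; exact hx⟩, hxa⟩
  rw [h]
  exact .sUnion (hP.mono (sep_subset _ _)) fun a ha => hmeas a ha.1

lemma measurableSet_detWalk_eq [Countable S] (hT : Measurable T)
    (hf : ∀ s j : S, MeasurableSet {x | f s x = j}) (i : S) (n : ℕ) (j : S) :
    MeasurableSet {x | detWalk T f i n x = j} := by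
  induction n generalizing j with
  | zero => exact .const (i = j)
  | succ n ih =>
    have h : {x | detWalk T f i (n + 1) x = j}
        = ⋃ s, {x | detWalk T f i n x = s} ∩ T^[n] ⁻¹' {x | f s x = j} := by
      ext x
      simp [detWalk_succ]
    rw [h]
    exact .iUnion fun s => (ih s).inter ((hT.iterate n) (hf s j))

end DeterministicWalk

lemma ae_forall_mem_measure_pos {X ι : Type*} [MeasurableSpace X] [Countable ι]
    (μ : Measure X) (s : ι → Set X) : ∀ᵐ x ∂μ, ∀ k, x ∈ s k → 0 < μ (s k) := by
  refine ae_all_iff.2 fun k => ?_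
  rcases eq_or_ne (μ (s k)) 0 with h | h
  · exact (measure_eq_zero_iff_ae_notMem.1 h).mono fun x hx hxs => absurd hxs hx
  · exact Eventually.of_forall fun _ _ => pos_iff_ne_zero.2 h

lemma ae_forall_mem_cylinder_measure_pos {X : Type*} [MeasurableSpace X] (μ : Measure X)
    (T : X → X) {P : Set (Set X)} (hP : P.Countable) :
    ∀ᵐ x ∂μ, ∀ n (w : Fin n → Set X), (∀ j, w j ∈ P) → x ∈ cylinder T w →
      0 < μ (cylinder T w) := by
  have : Countable P := hP
  filter_upwards [ae_forall_mem_measure_pos μ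
    fun w : (n : ℕ) × (Fin n → P) => cylinder T fun j => (w.2 j : Set X)] with x hx n w hw
  exact hx ⟨n, fun j => ⟨w j, hw j⟩⟩

lemma WalkTransitive.ae_forall_exists_detWalk_eq {X S : Type*} [MeasurableSpace X] [Finite S]
    {m : Measure X} [IsProbabilityMeasure m] {T : X → X} {f : S → X → S}
    (hW : WalkTransitive m T f) (hT : Measurable T)
    (hf : ∀ s j : S, MeasurableSet {x | f s x = j}) :
    ∀ᵐ x ∂m, ∀ i j : S, ∃ n, 1 ≤ n ∧ detWalk T f i n x = j := by
  refine ae_all_iff.2 fun i => ae_all_iff.2 fun j => ?_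
  refine (ae_iff_measure_eq (MeasurableSet.nullMeasurableSet ?_)).2 (by rw [hW i j, measure_univ])
  simp only [ofPred_exists, ofPred_and]
  exact .iUnion fun n => (MeasurableSet.const _).inter (measurableSet_detWalk_eq T f hT hf i n j)

theorem stmt_14_general {X S : Type*} [MeasurableSpace X] [Fintype S]
    (m : Measure X) [IsProbabilityMeasure m]
    (T : X → X) (hT : MeasurePreserving T m m)
    (β : Set (Set X)) (hMarkov : IsMarkovMap m T β) (hβfin : β.Finite)
    (f : S → X → S)
    (hconst : ∀ i : S, ∀ a ∈ β, ∀ x ∈ a, ∀ y ∈ a, f i x = f i y)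
    (hW : WalkTransitive m T f) :
    ∃ n : ℕ, 1 ≤ n ∧ ∃ w : Fin n → Set X, (∀ j, w j ∈ β) ∧
      0 < m (cylinder T w) ∧
      ∀ i : S, ∀ x ∈ cylinder T w, ∀ j : S, ∃ k : ℕ, detWalk T f i k x = j := by
  have hf (s j : S) : MeasurableSet {x | f s x = j} :=
    measurableSet_preimage_of_constOn_cover hβfin.countable hMarkov.measurableSet
      hMarkov.sUnion_eq (hconst s) {j}
  obtain ⟨x, hx_visits, hx_pos⟩ :=
    ((hW.ae_forall_exists_detWalk_eq hT.measurable hf).and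
      (ae_forall_mem_cylinder_measure_pos m T hβfin.countable)).exists
  choose time _ htime using hx_visits
  choose cell hcell hmem_cell using fun y => mem_sUnion.1 (hMarkov.sUnion_eq ▸ mem_univ y)
  set N := Finset.univ.sup (fun p : S × S => time p.1 p.2) + 1
  have htime_le (i j : S) : time i j ≤ N := by
    have : time i j ≤ _ :=
      Finset.le_sup (f := fun p : S × S => time p.1 p.2) (Finset.mem_univ (i, j))
    omega
  set w : Fin N → Set X := fun k => cell (T^[k] x)
  have hw : ∀ k, w k ∈ β := fun k => hcell _
  have hxw : x ∈ cylinder T w := mem_iInter.2 fun k => hmem_cell _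
  refine ⟨N, by omega, w, hw, hx_pos N w hw hxw, fun i y hy j => ⟨time i j, ?_⟩⟩
  rw [detWalk_eq_of_mem_cylinder T f hconst hw hy hxw i (htime_le i j), htime]

/-- If the deterministic walk is transitive on `S`, then there is a
cylinder set of positive measure that is transitive: from every point of it and every
starting state, the walk visits every state at least once. -/
theorem stmt_14 {X S : Type*} [MeasurableSpace X] [MeasurableSpace S]
    [MeasurableSingletonClass S] [Fintype S]
    (m : Measure X) [IsProbabilityMeasure m]
    (T : X → X) (hT : MeasurePreserving T m m) (hTerg : Ergodic T m)
    (β : Set (Set X)) (hMarkov : IsMarkovMap m T β) (hβfin : β.Finite)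
    (f : S → X → S)
    (hconst : ∀ i : S, ∀ a ∈ β, ∀ x ∈ a, ∀ y ∈ a, f i x = f i y)
    (hW : WalkTransitive m T f) :
    ∃ n : ℕ, 1 ≤ n ∧ ∃ w : Fin n → Set X, (∀ j, w j ∈ β) ∧
      0 < m (cylinder T w) ∧
      ∀ i : S, ∀ x ∈ cylinder T w, ∀ j : S, ∃ k : ℕ, detWalk T f i k x = j :=
  stmt_14_general m T hT β hMarkov hβfin f hconst hW
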